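/- In any (n, ℓ, r, t) secret sharing scheme with uniform secret, the parameters satisfy ℓ ≤ r − t. -/

import Mathlib

open Finset

/-- A probability mass function on a finite sample space. -/
structure FinPMF (Ω : Type*) [Fintype Ω] where
  p : Ω → ℝ
  nonneg : ∀ ω, 0 ≤ p ω
  sum_one : ∑ ω, p ω = 1

/-- Probability of an event. -/
noncomputable def prob {Ω : Type*} [Fintype Ω] (μ : FinPMF Ω) (E : Set Ω) : ℝ :=
  ∑ ω, E.indicator μ.p ω

/-- Shannon entropy (base `b`) of a random variable `X` on `(Ω, μ)`. -/
noncomputable def entropy {Ω A : Type*} [Fintype Ω] [Fintype A] (b : ℝ) (μ : FinPMF Ω)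
    (X : Ω → A) : ℝ :=
  -∑ a, prob μ {ω | X ω = a} * Real.logb b (prob μ {ω | X ω = a})

/-- Conditional entropy `H(X | Y) = H(X, Y) − H(Y)`. -/
noncomputable def condEntropy {Ω A B : Type*} [Fintype Ω] [Fintype A] [Fintype B] (b : ℝ)
    (μ : FinPMF Ω) (X : Ω → A) (Y : Ω → B) : ℝ :=
  entropy b μ (fun ω => (X ω, Y ω)) - entropy b μ Y

/-- Mutual information `I(X ; Y) = H(X) − H(X | Y)`. -/
noncomputable def mutualInfo {Ω A B : Type*} [Fintype Ω] [Fintype A] [Fintype B] (b : ℝ)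
    (μ : FinPMF Ω) (X : Ω → A) (Y : Ω → B) : ℝ :=
  entropy b μ X - condEntropy b μ X Y

/-!
Take `r` shares `R` and, inside them, `t` shares `T`. Privacy makes the secret as uncertain given
`x_T` as it is a priori, i.e. `ℓ` symbols; reconstruction makes it determined by `x_R`. Since
`x_T` is a function of `x_R`, `H(S | x_T) ≤ H(S | x_R) + H(x_R | x_T) = H(x_R | x_T)`; and
`H(x_R | x_T) ≤ H(x_{R \ T} | x_T) ≤ r - t`, because `x_R` is recovered from `x_{R \ T}` and `x_T`.
-/

section Entropy
variable {Ω A B C : Type*} [Fintype Ω] [Fintype A]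

lemma prob_mono (μ : FinPMF Ω) {E F : Set Ω} (h : E ⊆ F) : prob μ E ≤ prob μ F :=
  Finset.sum_le_sum fun ω _ => Set.indicator_le_indicator_of_subset h μ.nonneg ω

lemma prob_nonneg (μ : FinPMF Ω) (E : Set Ω) : 0 ≤ prob μ E :=
  Finset.sum_nonneg fun ω _ => Set.indicator_nonneg (fun ω _ => μ.nonneg ω) ω

lemma prob_comp_eq_sum [DecidableEq B] (μ : FinPMF Ω) (Z : Ω → A) (f : A → B) (c : B) :
    prob μ {ω | f (Z ω) = c} = ∑ a with f a = c, prob μ {ω | Z ω = a} := by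
  classical
  simp only [prob, Set.indicator_apply, Set.mem_ofPred_eq]
  rw [Finset.sum_comm]
  refine Finset.sum_congr rfl fun ω _ => ?_
  rw [Finset.sum_ite_eq]
  simp

variable [Fintype B] [Fintype C]

lemma sum_prob_mul_comp (μ : FinPMF Ω) (Z : Ω → A) (f : A → B) (g : B → ℝ) :
    ∑ a, prob μ {ω | Z ω = a} * g (f a) = ∑ c, prob μ {ω | f (Z ω) = c} * g c := by
  classical
  rw [← Finset.sum_fiberwise univ f]
  refine Finset.sum_congr rfl fun c _ => ?_
  rw [prob_comp_eq_sum, Finset.sum_mul]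
  exact Finset.sum_congr rfl fun a ha => by rw [(Finset.mem_filter.1 ha).2]

lemma sum_prob_eq_one (μ : FinPMF Ω) (Z : Ω → A) : ∑ a, prob μ {ω | Z ω = a} = 1 := by
  simpa [prob, μ.sum_one] using sum_prob_mul_comp μ Z (fun _ => ()) (fun _ => 1)

lemma entropy_comp_le {b : ℝ} (hb : 1 < b) (μ : FinPMF Ω) (Z : Ω → A) (f : A → B) :
    entropy b μ (fun ω => f (Z ω)) ≤ entropy b μ Z := by
  unfold entropy
  rw [neg_le_neg_iff, ← sum_prob_mul_comp μ Z f]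
  refine Finset.sum_le_sum fun a _ => ?_
  rcases (prob_nonneg μ {ω | Z ω = a}).eq_or_lt with h | h
  · simp [← h]
  · exact mul_le_mul_of_nonneg_left (Real.logb_le_logb_of_le hb h
      (prob_mono μ fun ω (hω : Z ω = a) => congrArg f hω)) h.le

lemma entropy_eq_logb_card_of_uniform (b : ℝ) (μ : FinPMF Ω) (Z : Ω → A)
    (h : ∀ a, prob μ {ω | Z ω = a} = (Fintype.card A : ℝ)⁻¹) :
    entropy b μ Z = Real.logb b (Fintype.card A) := by
  rcases eq_or_ne (Fintype.card A : ℝ) 0 with h0 | h0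
  · simp [entropy, h, h0]
  · simp [entropy, h, Real.logb_inv, h0]

lemma mul_logb_sub_logb_le {b p q c : ℝ} (hb : 1 < b) (hq : 0 ≤ q) (hqp : q ≤ p) (hc : 0 < c) :
    q * (Real.logb b p - Real.logb b q) ≤ (p / c - q) / Real.log b + q * Real.logb b c := by
  have hlogb : 0 < Real.log b := Real.log_pos hb
  rcases hq.eq_or_lt with rfl | hq
  · simp only [zero_mul, sub_zero, add_zero]
    positivity
  have hp : 0 < p := hq.trans_le hqp
  have gibbs : q * Real.log (p / (q * c)) ≤ q * (p / (q * c) - 1) :=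
    mul_le_mul_of_nonneg_left (Real.log_le_sub_one_of_pos (by positivity)) hq.le
  have hrhs : q * (p / (q * c) - 1) = p / c - q := by field_simp
  rw [Real.log_div hp.ne' (by positivity), Real.log_mul hq.ne' hc.ne', hrhs] at gibbs
  simp only [Real.logb, ← mul_div_assoc, mul_sub, ← sub_div, ← add_div]
  exact div_le_div_of_nonneg_right (by linarith) hlogb.le

lemma condEntropy_le_logb_card {b : ℝ} (hb : 1 < b) (μ : FinPMF Ω) (Z : Ω → A) (W : Ω → B) :
    condEntropy b μ Z W ≤ Real.logb b (Fintype.card A) := by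
  set q : A × B → ℝ := fun x => prob μ {ω | (Z ω, W ω) = x}
  set p : B → ℝ := fun w => prob μ {ω | W ω = w}
  have hc : (0 : ℝ) < Fintype.card A := by
    have : Nonempty A := by
      by_contra h
      simpa [not_nonempty_iff.1 h] using sum_prob_eq_one μ Z
    exact_mod_cast Fintype.card_pos
  have hqp : ∀ x, q x ≤ p x.2 := fun x => prob_mono μ fun ω (hω : (Z ω, W ω) = x) => by
    simp [← hω]
  have hcond : condEntropy b μ Z W = ∑ x, q x * (Real.logb b (p x.2) - Real.logb b (q x)) := by
    simp only [condEntropy, entropy, mul_sub, Finset.sum_sub_distrib]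
    rw [sum_prob_mul_comp μ (fun ω => (Z ω, W ω)) Prod.snd (fun w => Real.logb b (p w))]
    ring
  have hp : ∑ x : A × B, p x.2 / Fintype.card A = 1 := by
    rw [Fintype.sum_prod_type_right]
    simp only [Finset.sum_const, Finset.card_univ, nsmul_eq_mul]
    simp_rw [mul_div_cancel₀ _ hc.ne']
    exact sum_prob_eq_one μ W
  calc condEntropy b μ Z W
      ≤ ∑ x, ((p x.2 / Fintype.card A - q x) / Real.log b + q x * Real.logb b (Fintype.card A)) := by
        rw [hcond]
        exact Finset.sum_le_sum fun x _ => mul_logb_sub_logb_le hb (prob_nonneg _ _) (hqp x) hc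
    _ = Real.logb b (Fintype.card A) := by
        rw [Finset.sum_add_distrib, ← Finset.sum_div, Finset.sum_sub_distrib, ← Finset.sum_mul, hp,
          sum_prob_eq_one μ (fun ω => (Z ω, W ω))]
        simp

lemma condEntropy_le_of_comp {b : ℝ} (hb : 1 < b) (μ : FinPMF Ω) {W : Ω → A} (Z : Ω → B)
    (Y : Ω → C) (f : B → C → A) (hW : ∀ ω, W ω = f (Z ω) (Y ω)) :
    condEntropy b μ W Y ≤ condEntropy b μ Z Y := by
  obtain rfl : W = fun ω => f (Z ω) (Y ω) := funext hW
  have := entropy_comp_le hb μ (fun ω => (Z ω, Y ω)) fun x => (f x.1 x.2, x.2)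
  unfold condEntropy
  linarith

lemma condEntropy_le_add_condEntropy_of_comp {b : ℝ} (hb : 1 < b) (μ : FinPMF Ω) (S : Ω → A)
    {Y : Ω → B} (Y' : Ω → C) (f : C → B) (hY : ∀ ω, Y ω = f (Y' ω)) :
    condEntropy b μ S Y ≤ condEntropy b μ S Y' + condEntropy b μ Y' Y := by
  obtain rfl : Y = fun ω => f (Y' ω) := funext hY
  have h₁ := entropy_comp_le hb μ (fun ω => (S ω, Y' ω)) fun x => (x.1, f x.2)
  have h₂ := entropy_comp_le hb μ (fun ω => (Y' ω, f (Y' ω))) Prod.fst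
  unfold condEntropy
  linarith

end Entropy

lemma condEntropy_restrict_le {Ω ι A : Type*} [Fintype Ω] [Fintype A] [DecidableEq ι] {b : ℝ}
    (hb : 1 < b) (μ : FinPMF Ω) (X : Ω → ι → A) (T R : Finset ι) :
    condEntropy b μ (fun ω => R.restrict (X ω)) (fun ω => T.restrict (X ω))
      ≤ #(R \ T) * Real.logb b (Fintype.card A) := by
  let glue (z : ↥(R \ T) → A) (y : T → A) (i : R) : A :=
    if h : i.1 ∈ T then y ⟨i, h⟩ else z ⟨i, mem_sdiff.2 ⟨i.2, h⟩⟩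
  calc _ ≤ condEntropy b μ (fun ω => (R \ T).restrict (X ω)) (fun ω => T.restrict (X ω)) :=
        condEntropy_le_of_comp hb μ _ _ glue fun ω => funext fun i => by
          by_cases h : i.1 ∈ T <;> simp [glue, h]
    _ ≤ Real.logb b (Fintype.card (↥(R \ T) → A)) := condEntropy_le_logb_card hb μ _ _
    _ = #(R \ T) * Real.logb b (Fintype.card A) := by
        rw [Fintype.card_fun, Fintype.card_coe, Nat.cast_pow, Real.logb_pow]

theorem secret_sharing_rate_bound_general
    {Ω A : Type*} [Fintype Ω] [Fintype A] (hA : 2 ≤ Fintype.card A)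
    (n ℓ r t : ℕ) (hℓ : 1 ≤ ℓ) (hr : r ≤ n)
    (μ : FinPMF Ω) (S : Ω → Fin ℓ → A) (X : Ω → Fin n → A)
    (hunif : ∀ s : Fin ℓ → A, prob μ {ω | S ω = s} = (Fintype.card (Fin ℓ → A) : ℝ)⁻¹)
    (hrec : ∀ I : Finset (Fin n), r ≤ I.card →
      condEntropy (Fintype.card A) μ S (fun ω (i : { j // j ∈ I }) => X ω i.1) = 0)
    (hpriv : ∀ I : Finset (Fin n), I.card ≤ t →
      condEntropy (Fintype.card A) μ S (fun ω (i : { j // j ∈ I }) => X ω i.1)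
        = entropy (Fintype.card A) μ S) :
    ℓ + t ≤ r := by
  have hb : (1 : ℝ) < Fintype.card A := by exact_mod_cast hA
  obtain ⟨R, -, hR⟩ := exists_subset_card_eq (s := (univ : Finset (Fin n))) (by simpa using hr)
  obtain ⟨T, hTR, hT⟩ := exists_subset_card_eq (s := R) (n := min t r) (by omega)
  have hS : entropy (Fintype.card A) μ S = ℓ := by
    rw [entropy_eq_logb_card_of_uniform _ μ S hunif, Fintype.card_fun, Fintype.card_fin,
      Nat.cast_pow, Real.logb_pow, Real.logb_self_eq_one hb, mul_one]
  have key : (ℓ : ℝ) ≤ #(R \ T) :=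
    calc (ℓ : ℝ) = condEntropy (Fintype.card A) μ S (fun ω => T.restrict (X ω)) :=
          (hS ▸ hpriv T (by omega)).symm
      _ ≤ condEntropy (Fintype.card A) μ S (fun ω => R.restrict (X ω))
            + condEntropy (Fintype.card A) μ (fun ω => R.restrict (X ω))
                (fun ω => T.restrict (X ω)) :=
          condEntropy_le_add_condEntropy_of_comp hb μ S _ (restrict₂ (π := fun _ => A) hTR)
            fun _ => rfl
      _ = condEntropy (Fintype.card A) μ (fun ω => R.restrict (X ω))
            (fun ω => T.restrict (X ω)) := by
            rw [show condEntropy _ μ S (fun ω => R.restrict (X ω)) = 0 from hrec R hR.ge, zero_add]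
      _ ≤ #(R \ T) := by
          simpa [Real.logb_self_eq_one hb] using condEntropy_restrict_le hb μ X T R
  rw [card_sdiff_of_subset hTR, hR, hT] at key
  have : ℓ ≤ r - min t r := by exact_mod_cast key
  omega

/-- In any `(n, ℓ, r, t)` secret sharing scheme with uniform secret,
`ℓ ≤ r − t` (stated as `ℓ + t ≤ r`). Entropies are taken with base `#𝒜`. -/
theorem secret_sharing_rate_bound
    {Ω A : Type*} [Fintype Ω] [Fintype A] (hA : 2 ≤ Fintype.card A)
    (n ℓ r t : ℕ) (hℓ : 1 ≤ ℓ) (hr : r ≤ n) (ht : t ≤ n)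
    (μ : FinPMF Ω) (S : Ω → Fin ℓ → A) (X : Ω → Fin n → A)
    (hunif : ∀ s : Fin ℓ → A, prob μ {ω | S ω = s} = (Fintype.card (Fin ℓ → A) : ℝ)⁻¹)
    (hrec : ∀ I : Finset (Fin n), r ≤ I.card →
      condEntropy (Fintype.card A) μ S (fun ω (i : { j // j ∈ I }) => X ω i.1) = 0)
    (hpriv : ∀ I : Finset (Fin n), I.card ≤ t →
      condEntropy (Fintype.card A) μ S (fun ω (i : { j // j ∈ I }) => X ω i.1)
        = entropy (Fintype.card A) μ S) :
    ℓ + t ≤ r :=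
  secret_sharing_rate_bound_general hA n ℓ r t hℓ hr μ S X hunif hrec hpriv
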